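/- For every natural number n, every positive integer N, and every t ∈ [0, 1/(N·2ⁿ + 2)], one has g₂^[N](g₁^[n](t)) = 2ⁿ·t / (((2 − N)·2ⁿ − 2)·t + 1). -/

import Mathlib

/-!
On `[0, 1/2]` the map `g₁` is the Möbius transformation `t ↦ 2t/(2t+1)`, and on `[0, 1/3]` the
map `g₂` is `t ↦ t/(1-t)`. Both fix `0`, so their matrices are lower triangular and iterating
them only multiplies such matrices: `g₁^[n]` acts as `t ↦ 2ⁿt/(2(2ⁿ-1)t+1)` and `g₂^[N]` as
`s ↦ s/(1-Ns)`, as long as the orbit stays in the respective interval. The bound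
`t ≤ 1/(N·2ⁿ+2)` is exactly the condition `s = g₁^[n] t ≤ 1/(N+2)` that keeps the `g₂`-orbit of
`s` inside `[0, 1/3]`.
-/

/-- The element `g₁` of the Lodha–Moore group as a piecewise fractional linear map. -/
noncomputable def g₁ (t : ℝ) : ℝ :=
  if t ≤ 0 then t
  else if t ≤ 1 / 2 then 2 * t / (2 * t + 1)
  else if t ≤ 1 then 1 / (3 - 2 * t)
  else t

/-- The element `g₂` of the Lodha–Moore group as a piecewise fractional linear map. -/
noncomputable def g₂ (t : ℝ) : ℝ :=
  if t ≤ 0 then t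
  else if t ≤ 1 / 3 then t / (1 - t)
  else if t ≤ 1 / 2 then (4 * t - 1) / (5 * t - 1)
  else if t ≤ 1 then 1 / (2 - t)
  else t

open Set

/-- The Möbius transformation with matrix `!![a, 0; c, 1]`. -/
noncomputable def fracLin (a c t : ℝ) : ℝ := a * t / (c * t + 1)

theorem fracLin_fracLin (a b c d t : ℝ) (h : d * t + 1 ≠ 0) :
    fracLin a c (fracLin b d t) = fracLin (a * b) (c * b + d) t := by
  unfold fracLin
  rw [mul_div_assoc', mul_div_assoc', div_add_one h, div_div_div_cancel_right₀ h]
  ring_nf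

theorem g₁_eq_fracLin {t : ℝ} (ht : t ∈ Icc (0 : ℝ) (1 / 2)) : g₁ t = fracLin 2 2 t := by
  obtain ⟨h0, h1⟩ := ht
  rcases h0.eq_or_lt with rfl | hpos
  · simp [g₁, fracLin]
  · simp only [g₁, fracLin, if_neg hpos.not_ge, if_pos h1]

theorem g₂_eq_fracLin {t : ℝ} (ht : t ∈ Icc (0 : ℝ) (1 / 3)) : g₂ t = fracLin 1 (-1) t := by
  obtain ⟨h0, h1⟩ := ht
  rcases h0.eq_or_lt with rfl | hpos
  · simp [g₂, fracLin]
  · simp only [g₂, fracLin, if_neg hpos.not_ge, if_pos h1]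
    ring_nf

theorem g₁_iterate_eq_fracLin (n : ℕ) {t : ℝ} (ht : t ∈ Icc (0 : ℝ) (1 / 2)) :
    g₁^[n] t = fracLin (2 ^ n) (2 * (2 ^ n - 1)) t := by
  obtain ⟨h0, h1⟩ := ht
  induction n with
  | zero => simp [fracLin]
  | succ n ih =>
    have hd : 0 < 2 * ((2 : ℝ) ^ n - 1) * t + 1 := by
      nlinarith [one_le_pow₀ (M₀ := ℝ) (n := n) one_le_two]
    have hs : fracLin (2 ^ n) (2 * (2 ^ n - 1)) t ∈ Icc (0 : ℝ) (1 / 2) := by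
      refine ⟨by unfold fracLin; positivity, ?_⟩
      rw [fracLin, div_le_iff₀ hd]
      linarith
    rw [Function.iterate_succ_apply', ih, g₁_eq_fracLin hs, fracLin_fracLin _ _ _ _ _ hd.ne']
    ring_nf

theorem g₂_iterate_eq_fracLin (N : ℕ) {s : ℝ} (h0 : 0 ≤ s) (h1 : (N + 2) * s ≤ 1) :
    g₂^[N] s = fracLin 1 (-N) s := by
  induction N with
  | zero => simp [fracLin]
  | succ N ih =>
    push_cast at h1 ⊢
    have hd : 0 < -N * s + 1 := by nlinarith
    have hv : fracLin 1 (-N) s ∈ Icc (0 : ℝ) (1 / 3) := by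
      refine ⟨by unfold fracLin; positivity, ?_⟩
      rw [fracLin, div_le_iff₀ hd]
      linarith
    rw [Function.iterate_succ_apply', ih (by linarith), g₂_eq_fracLin hv,
      fracLin_fracLin _ _ _ _ _ hd.ne']
    ring_nf

theorem g₂_iter_g₁_iter_formula₁_general (n : ℕ) (N : ℕ) (t : ℝ)
    (ht : t ∈ Set.Icc (0 : ℝ) (1 / ((N : ℝ) * 2 ^ n + 2))) :
    g₂^[N] (g₁^[n] t) = 2 ^ n * t / (((2 - (N : ℝ)) * 2 ^ n - 2) * t + 1) := by
  obtain ⟨h0, h1⟩ := ht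
  have h2n : (1 : ℝ) ≤ 2 ^ n := one_le_pow₀ one_le_two
  have hbound : ((N : ℝ) * 2 ^ n + 2) * t ≤ 1 := by
    rwa [le_div_iff₀ (by positivity), mul_comm] at h1
  have hd : 0 < 2 * ((2 : ℝ) ^ n - 1) * t + 1 := by nlinarith
  have hs : (N + 2) * fracLin (2 ^ n) (2 * (2 ^ n - 1)) t ≤ 1 := by
    rw [fracLin, mul_div_assoc', div_le_one hd]
    linarith
  rw [g₁_iterate_eq_fracLin n ⟨h0, by nlinarith⟩,
    g₂_iterate_eq_fracLin N (by unfold fracLin; positivity) hs,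
    fracLin_fracLin _ _ _ _ _ hd.ne', fracLin]
  ring_nf

/-- Formula for `g₂^[N] ∘ g₁^[n]` on `[0, 1/(N·2ⁿ + 2)]`. -/
theorem g₂_iter_g₁_iter_formula₁ (n : ℕ) (N : ℕ) (hN : 0 < N) (t : ℝ)
    (ht : t ∈ Set.Icc (0 : ℝ) (1 / ((N : ℝ) * 2 ^ n + 2))) :
    g₂^[N] (g₁^[n] t) = 2 ^ n * t / (((2 - (N : ℝ)) * 2 ^ n - 2) * t + 1) :=
  g₂_iter_g₁_iter_formula₁_general n N t ht
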